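/- Fix R > 0 and a smooth function τ : ℝ³ → ℝ with 0 ≤ τ ≤ 1, τ(x) = 1 for |x| ≤ R and τ(x) = 0 for |x| ≥ 2R, and for ε > 0 set U_ε := τ·u_ε where u_ε(x) = 3^{1/4}·ε^{1/2}·(ε² + |x|²)^{−1/2}. Then there exist constants C > 0, C′ > 0 and ε₀ > 0 such that for all ε ∈ (0, ε₀), −∫_{ℝ³} A(U_ε(x)) dx ≥ C·∫_{ℝ³} U_ε(x)²·log(U_ε(x)²) dx − C′·ε, where the integrand t² log(t²) is interpreted as 0 at t = 0. -/

import Mathlib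

open MeasureTheory

/-- The convex function `A` from Cazenave's Orlicz-space framework. -/
noncomputable def Afun (s : ℝ) : ℝ :=
  if s < Real.exp (-3) then -(s ^ 2 * Real.log (s ^ 2))
  else 3 * s ^ 2 + 4 * Real.exp (-3) * s - Real.exp (-6)

/-- The Aubin–Talenti bubble `u_ε(x) = 3^{1/4} ε^{1/2} (ε² + |x|²)^{-1/2}` on `ℝ³`. -/
noncomputable def bubble (ε : ℝ) : EuclideanSpace ℝ (Fin 3) → ℝ :=
  fun x => (3 : ℝ) ^ ((1 : ℝ) / 4) * ε ^ ((1 : ℝ) / 2) * (ε ^ 2 + ‖x‖ ^ 2) ^ (-(1 : ℝ) / 2)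

lemma continuous_Afun : Continuous Afun := by
  have hf : Continuous fun s : ℝ => -(s ^ 2 * Real.log (s ^ 2)) :=
    (Real.continuous_mul_log.comp (continuous_pow 2)).neg
  have hg : Continuous fun s : ℝ =>
      3 * s ^ 2 + 4 * Real.exp (-3) * s - Real.exp (-6) := by continuity
  refine Continuous.if ?_ hf hg
  intro a ha
  rw [show {x : ℝ | x < Real.exp (-3)} = Set.Iio (Real.exp (-3)) from rfl,
    frontier_Iio] at ha
  simp only [Set.mem_singleton_iff] at ha
  subst ha
  have h6 : Real.exp (-3) ^ 2 = Real.exp (-6) := by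
    rw [sq, ← Real.exp_add]; norm_num
  have h6' : Real.exp (-3) * Real.exp (-3) = Real.exp (-6) := by
    rw [← Real.exp_add]; norm_num
  rw [h6, Real.log_exp]
  nlinarith [h6']

lemma Afun_zero : Afun 0 = 0 := by
  unfold Afun
  rw [if_pos (Real.exp_pos (-3))]
  simp

lemma Afun_add_le (s : ℝ) (hs : 0 ≤ s) :
    Afun s + s ^ 2 * Real.log (s ^ 2) ≤ 9 * Real.exp 6 * s ^ 4 := by
  unfold Afun
  split_ifs with h
  · have : (0:ℝ) ≤ 9 * Real.exp 6 * s ^ 4 := by positivity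
    linarith
  · push_neg at h
    have hs0 : 0 < s := lt_of_lt_of_le (Real.exp_pos _) h
    have hlog : Real.log s ≤ s := (Real.log_le_sub_one_of_pos hs0).trans (by linarith)
    have hlog2 : Real.log (s ^ 2) = 2 * Real.log s := by
      rw [Real.log_pow]; norm_num
    have h1 : 1 ≤ Real.exp 3 * s := by
      have h2 := mul_le_mul_of_nonneg_left h (Real.exp_pos 3).le
      rwa [← Real.exp_add, show (3:ℝ) + -3 = 0 by norm_num, Real.exp_zero] at h2
    have he6 : Real.exp 3 * Real.exp 3 = Real.exp 6 := by rw [← Real.exp_add]; norm_num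
    have hee : (1:ℝ) ≤ Real.exp 3 := Real.one_le_exp (by norm_num)
    have h2 : 1 ≤ Real.exp 6 * s ^ 2 := by nlinarith
    have hA : 3 * s ^ 2 ≤ 3 * Real.exp 6 * s ^ 4 := by nlinarith
    have hB : 4 * Real.exp (-3) * s ≤ 4 * Real.exp 6 * s ^ 4 := by nlinarith
    have hC : s ^ 2 * (2 * Real.log s) ≤ 2 * Real.exp 6 * s ^ 4 := by
      have c1 : s ^ 2 * (2 * Real.log s) ≤ 2 * s ^ 3 := by nlinarith
      have c2 : 1 ≤ Real.exp 6 * s := by nlinarith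
      nlinarith
    have hD : 0 < Real.exp (-6) := Real.exp_pos _
    rw [hlog2]
    linarith

noncomputable def gfun : EuclideanSpace ℝ (Fin 3) → ℝ :=
  fun y => ((1:ℝ) + ‖y‖ ^ 2) ^ (-(4:ℝ) / 2)

lemma gfun_integrable : Integrable gfun := by
  exact integrable_rpow_neg_one_add_norm_sq (r := 4)
    (by rw [finrank_euclideanSpace_fin]; norm_num)

lemma gfun_nonneg (y : EuclideanSpace ℝ (Fin 3)) : 0 ≤ gfun y :=
  Real.rpow_nonneg (by positivity) _

lemma bubble_pow4 {ε : ℝ} (hε : 0 < ε) (x : EuclideanSpace ℝ (Fin 3)) :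
    (bubble ε x) ^ 4 = 3 * ε⁻¹ * ε⁻¹ * gfun (ε⁻¹ • x) := by
  have hw : (0:ℝ) < ε ^ 2 + ‖x‖ ^ 2 := by positivity
  have hg : gfun (ε⁻¹ • x) = ε ^ 4 * (ε ^ 2 + ‖x‖ ^ 2) ^ (-(2:ℝ)) := by
    unfold gfun
    have hnx : ‖ε⁻¹ • x‖ ^ 2 = ε⁻¹ ^ 2 * ‖x‖ ^ 2 := by
      rw [norm_smul, mul_pow]
      simp [abs_of_pos (inv_pos.2 hε)]
    rw [hnx]
    have h1 : (1:ℝ) + ε⁻¹ ^ 2 * ‖x‖ ^ 2 = ε⁻¹ ^ 2 * (ε ^ 2 + ‖x‖ ^ 2) := by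
      field_simp
    rw [h1, show (-(4:ℝ)/2) = (-(2:ℝ)) by norm_num,
      Real.mul_rpow (by positivity) hw.le]
    congr 1
    rw [show (ε⁻¹ ^ 2 : ℝ) = ((ε ^ 2)⁻¹ : ℝ) by rw [inv_pow],
      Real.inv_rpow (by positivity), Real.rpow_neg (by positivity), inv_inv,
      show ((2:ℝ)) = ((2:ℕ):ℝ) by norm_num, Real.rpow_natCast]
    ring
  rw [hg]
  unfold bubble
  rw [mul_pow, mul_pow]
  have h3 : ((3:ℝ) ^ ((1:ℝ)/4)) ^ 4 = 3 := by
    rw [← Real.rpow_natCast ((3:ℝ) ^ ((1:ℝ)/4)) 4,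
      ← Real.rpow_mul (by norm_num : (0:ℝ) ≤ 3)]
    norm_num
  have h4 : (ε ^ ((1:ℝ)/2)) ^ 4 = ε ^ 2 := by
    rw [← Real.rpow_natCast (ε ^ ((1:ℝ)/2)) 4, ← Real.rpow_mul hε.le,
      ← Real.rpow_natCast ε 2]
    norm_num
  have h5 : ((ε ^ 2 + ‖x‖ ^ 2) ^ (-(1:ℝ)/2)) ^ 4 = (ε ^ 2 + ‖x‖ ^ 2) ^ (-(2:ℝ)) := by
    rw [← Real.rpow_natCast ((ε ^ 2 + ‖x‖ ^ 2) ^ (-(1:ℝ)/2)) 4, ← Real.rpow_mul hw.le]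
    norm_num
  rw [h3, h4, h5]
  field_simp

lemma gfun_comp_integrable {ε : ℝ} (hε : 0 < ε) :
    Integrable (fun x : EuclideanSpace ℝ (Fin 3) => gfun (ε⁻¹ • x)) :=
  gfun_integrable.comp_smul (inv_ne_zero hε.ne')

lemma gfun_comp_integral {ε : ℝ} (hε : 0 < ε) :
    ∫ x : EuclideanSpace ℝ (Fin 3), gfun (ε⁻¹ • x)
      = ε ^ 3 * ∫ y : EuclideanSpace ℝ (Fin 3), gfun y := by
  rw [Measure.integral_comp_inv_smul_of_nonneg volume gfun hε.le, finrank_euclideanSpace_fin,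
    smul_eq_mul]

theorem stmt16 (R : ℝ) (hR : 0 < R) (τ : EuclideanSpace ℝ (Fin 3) → ℝ)
    (hτsmooth : ContDiff ℝ (⊤ : ℕ∞) τ) (hτ0 : ∀ x, 0 ≤ τ x) (hτ1 : ∀ x, τ x ≤ 1)
    (hτin : ∀ x : EuclideanSpace ℝ (Fin 3), ‖x‖ ≤ R → τ x = 1)
    (hτout : ∀ x : EuclideanSpace ℝ (Fin 3), 2 * R ≤ ‖x‖ → τ x = 0) :
    ∃ C C' ε₀ : ℝ, 0 < C ∧ 0 < C' ∧ 0 < ε₀ ∧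
      ∀ ε : ℝ, 0 < ε → ε < ε₀ →
        C * (∫ x : EuclideanSpace ℝ (Fin 3),
              (τ x * bubble ε x) ^ 2 * Real.log ((τ x * bubble ε x) ^ 2)) - C' * ε ≤
          -∫ x : EuclideanSpace ℝ (Fin 3), Afun (τ x * bubble ε x) := by
  set I : ℝ := ∫ y : EuclideanSpace ℝ (Fin 3), gfun y with hI
  have hI0 : 0 ≤ I := integral_nonneg gfun_nonneg
  have hC' : 0 < 27 * Real.exp 6 * I + 1 := by positivity
  refine ⟨1, 27 * Real.exp 6 * I + 1, 1, one_pos, hC', one_pos, ?_⟩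
  intro ε hε hε1
  -- basic positivity facts
  have hw : ∀ x : EuclideanSpace ℝ (Fin 3), (0:ℝ) < ε ^ 2 + ‖x‖ ^ 2 := fun x => by positivity
  have hb0 : ∀ x, 0 ≤ bubble ε x := by
    intro x; unfold bubble; positivity
  have hU0 : ∀ x, 0 ≤ τ x * bubble ε x := fun x => mul_nonneg (hτ0 x) (hb0 x)
  have hUb : ∀ x, τ x * bubble ε x ≤ bubble ε x := fun x =>
    mul_le_of_le_one_left (hb0 x) (hτ1 x)
  -- continuity
  have hcb : Continuous (bubble ε) := by
    unfold bubble
    exact continuous_const.mul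
      ((continuous_const.add (continuous_norm.pow 2)).rpow_const
        (fun x => Or.inl (hw x).ne'))
  have hcU : Continuous fun x => τ x * bubble ε x := hτsmooth.continuous.mul hcb
  set f₁ : EuclideanSpace ℝ (Fin 3) → ℝ :=
    fun x => (τ x * bubble ε x) ^ 2 * Real.log ((τ x * bubble ε x) ^ 2) with hf₁
  set f₂ : EuclideanSpace ℝ (Fin 3) → ℝ := fun x => Afun (τ x * bubble ε x) with hf₂
  have hcf₁ : Continuous f₁ := Real.continuous_mul_log.comp (hcU.pow 2)
  have hcf₂ : Continuous f₂ := continuous_Afun.comp hcU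
  -- compact support
  have hsupp : ∀ x : EuclideanSpace ℝ (Fin 3),
      x ∉ Metric.closedBall (0 : EuclideanSpace ℝ (Fin 3)) (2 * R) →
      τ x * bubble ε x = 0 := by
    intro x hx
    rw [Metric.mem_closedBall, not_le, dist_zero_right] at hx
    rw [hτout x hx.le, zero_mul]
  have hK₁ : HasCompactSupport f₁ :=
    HasCompactSupport.intro (isCompact_closedBall _ _)
      (fun x hx => by rw [hf₁]; simp only; rw [hsupp x hx]; simp)
  have hK₂ : HasCompactSupport f₂ :=
    HasCompactSupport.intro (isCompact_closedBall _ _)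
      (fun x hx => by rw [hf₂]; simp only; rw [hsupp x hx, Afun_zero])
  have hi₁ : Integrable f₁ := hcf₁.integrable_of_hasCompactSupport hK₁
  have hi₂ : Integrable f₂ := hcf₂.integrable_of_hasCompactSupport hK₂
  -- dominating function
  set M : EuclideanSpace ℝ (Fin 3) → ℝ :=
    fun x => 27 * Real.exp 6 * ε⁻¹ * ε⁻¹ * gfun (ε⁻¹ • x) with hM
  have hiM : Integrable M := (gfun_comp_integrable hε).const_mul _
  have hptwise : ∀ x, f₂ x + f₁ x ≤ M x := by
    intro x
    have h1 := Afun_add_le (τ x * bubble ε x) (hU0 x)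
    have h2 : (τ x * bubble ε x) ^ 4 ≤ (bubble ε x) ^ 4 :=
      pow_le_pow_left₀ (hU0 x) (hUb x) 4
    have h3 := bubble_pow4 hε x
    rw [hf₁, hf₂, hM]
    simp only
    have hE : (0:ℝ) < Real.exp 6 := Real.exp_pos _
    nlinarith [h1, h2, h3]
  have hint : (∫ x, f₂ x) + (∫ x, f₁ x) ≤ ∫ x, M x := by
    rw [← integral_add hi₂ hi₁]
    exact integral_mono (hi₂.add hi₁) hiM hptwise
  have hMval : (∫ x, M x) = 27 * Real.exp 6 * I * ε := by
    rw [hM]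
    simp only
    rw [integral_const_mul, gfun_comp_integral hε, ← hI]
    field_simp
  have hfinal : (∫ x, f₂ x) + (∫ x, f₁ x) ≤ 27 * Real.exp 6 * I * ε := by
    rw [← hMval]; exact hint
  have : 27 * Real.exp 6 * I * ε ≤ (27 * Real.exp 6 * I + 1) * ε - 0 := by nlinarith
  linarith
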